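/- arXiv:1807.02055 — 3 statements merged into one kernel-verified Lean document; each statement's English description precedes it below -/
import Mathlib

section
/- Every near-complete (v,k,k-1) disjoint difference family in an abelian group G of order v is also a near-complete (v,k,v-k-1) external difference family in G. -/
open Finset

/-- Multiplicity of `x` in the internal difference multiset `ΔA`. -/
def diffCount {G : Type*} [AddCommGroup G] [DecidableEq G] (A : Finset G) (x : G) : ℕ :=
  ((A ×ˢ A).filter (fun q => q.1 ≠ q.2 ∧ q.1 - q.2 = x)).card

/-- Multiplicity of `x` in the external difference multiset `A - B` (for disjoint `A, B`). -/
def extDiffCount {G : Type*} [AddCommGroup G] [DecidableEq G] (A B : Finset G) (x : G) : ℕ :=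
  ((A ×ˢ B).filter (fun q => q.1 - q.2 = x)).card

/-! Counting pairs `(a, c)` with `a - c = x` over all ordered pairs of blocks counts them over
`(G ∖ {0})²`, which gives `v - 2`. The pairs inside a single block are exactly the internal
differences, contributing `k - 1`, so the pairs in distinct blocks number `v - 2 - (k - 1)`. -/

theorem Finset.sum_sum_eq_sum_sum_ne_add_sum_diag {ι M : Type*} [Fintype ι] [DecidableEq ι]
    [AddCommMonoid M] (f : ι → ι → M) :
    ∑ i, ∑ j, f i j = ∑ i, ∑ j, (if i ≠ j then f i j else 0) + ∑ i, f i i := by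
  rw [← sum_add_distrib]
  refine sum_congr rfl fun i _ => ?_
  rw [← sum_filter, filter_ne, sum_erase_add _ _ (mem_univ i)]

section DiffCount

variable {G : Type*} [AddCommGroup G] [DecidableEq G]

theorem extDiffCount_eq_sum (A B : Finset G) (x : G) :
    extDiffCount A B x = ∑ a ∈ A, ∑ c ∈ B, if a - c = x then 1 else 0 := by
  rw [extDiffCount, card_filter, sum_product]

theorem extDiffCount_biUnion_left {ι : Type*} {s : Finset ι} {D : ι → Finset G}
    (hD : (s : Set ι).PairwiseDisjoint D) (B : Finset G) (x : G) :
    extDiffCount (s.biUnion D) B x = ∑ i ∈ s, extDiffCount (D i) B x := by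
  simp only [extDiffCount_eq_sum]
  exact sum_biUnion hD

theorem extDiffCount_biUnion_right {ι : Type*} {s : Finset ι} {D : ι → Finset G}
    (hD : (s : Set ι).PairwiseDisjoint D) (A : Finset G) (x : G) :
    extDiffCount A (s.biUnion D) x = ∑ i ∈ s, extDiffCount A (D i) x := by
  simp only [extDiffCount_eq_sum, sum_biUnion hD]
  exact sum_comm

theorem extDiffCount_self {A : Finset G} {x : G} (hx : x ≠ 0) :
    extDiffCount A A x = diffCount A x := by
  refine congrArg card (filter_congr fun q _ => ?_)
  exact ⟨fun h => ⟨fun he => hx (by rw [← h, he, sub_self]), h⟩, And.right⟩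

theorem extDiffCount_univ_sdiff_zero [Fintype G] {x : G} (hx : x ≠ 0) :
    extDiffCount (univ \ {0}) (univ \ {0}) x = Fintype.card G - 2 := by
  have hrow (a : G) :
      ∑ c ∈ univ \ {0}, (if a - c = x then 1 else 0) = if a ≠ x then 1 else 0 := by
    have hsolve (c : G) : a - c = x ↔ a - x = c := by rw [sub_eq_iff_eq_add, sub_eq_iff_eq_add']
    simp only [hsolve, sum_ite_eq, mem_sdiff, mem_univ, mem_singleton, sub_eq_zero, true_and]
  rw [extDiffCount_eq_sum, sum_congr rfl fun a _ => hrow a, ← card_filter, filter_ne',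
    card_erase_of_mem (by simpa using hx), card_univ_sdiff, card_singleton]
  rfl

end DiffCount

/-- Every near-complete `(v,k,k-1)` disjoint difference family in an abelian group
`G` of order `v` is also a near-complete `(v,k,v-k-1)` external difference family. -/
theorem stmt1 {G : Type*} [AddCommGroup G] [Fintype G] [DecidableEq G]
    (v b k : ℕ) (hv : Fintype.card G = v)
    (D : Fin b → Finset G)
    (hk : ∀ i, (D i).card = k)
    (hdisj : ∀ i j, i ≠ j → Disjoint (D i) (D j))
    (hnc : Finset.univ.biUnion D = Finset.univ \ {0})
    (hddf : ∀ x : G, x ≠ 0 → ∑ i : Fin b, diffCount (D i) x = k - 1) :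
    ∀ x : G, x ≠ 0 →
      ∑ i : Fin b, ∑ j : Fin b, (if i ≠ j then extDiffCount (D i) (D j) x else 0)
        = v - k - 1 := by
  intro x hx
  have hD : ((univ : Finset (Fin b)) : Set (Fin b)).PairwiseDisjoint D :=
    fun i _ j _ hij => hdisj i j hij
  -- `k - 1` in `hddf` is truncated, so the final arithmetic needs a nonempty block.
  have hk_pos : 1 ≤ k := by
    obtain ⟨i, -, hxi⟩ := mem_biUnion.1 (hnc ▸ by simpa using hx : x ∈ univ.biUnion D)
    exact hk i ▸ card_pos.2 ⟨x, hxi⟩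
  have htotal : ∑ i, ∑ j, extDiffCount (D i) (D j) x = v - 2 := by
    rw [← hv, ← extDiffCount_univ_sdiff_zero hx, ← hnc, extDiffCount_biUnion_left hD]
    simp only [extDiffCount_biUnion_right hD]
  rw [sum_sum_eq_sum_sum_ne_add_sum_diag] at htotal
  simp only [extDiffCount_self hx, hddf x hx] at htotal
  omega
end

section
/- In GR(4, r) with r ≥ 2, the Teichmüller set T is a (2^r, 2^r, 2^r, 1) relative difference set in the additive group of GR(4, r) relative to the maximal ideal I = 2·GR(4, r): every element of GR(4,r) \ I has exactly one representation as a difference β - β' of distinct elements β, β' ∈ T, and no nonzero element of I has such a representation. -/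
/-!
Every element of `T` satisfies `t ^ 2 ^ r = t`, and since `(a + 2c)² = a²` when `4 = 0`, reduction
modulo `2` is injective on such elements; so differences of distinct elements of `T` are units.
Comparing coefficients of `2` in `(a + b) ^ 2 ^ r = a + b + 2 (a b) ^ 2 ^ (r - 1)` shows that on `T`
the sum `a + b` determines the product `a b`. Hence `a - b = a' - b'`, i.e. `a + b' = a' + b`, gives
`a b' = a' b` and `(a - a') (a - b) = 0`, so the representation is unique. Finally the
`2 ^ r (2 ^ r - 1)` distinct differences avoid `(2)`, which contains the `2 ^ r` elements `2 t`;
in a ring of order `4 ^ r` they therefore exhaust the complement of `(2)`.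
-/

open Finset

section DiffCount

variable {G : Type*} [AddCommGroup G] [DecidableEq G] {A : Finset G} {x : G}

theorem diffCount_eq_zero_of_notMem_image
    (hx : x ∉ A.offDiag.image (fun p => p.1 - p.2)) : diffCount A x = 0 := by
  rw [diffCount, card_eq_zero, filter_eq_empty_iff]
  rintro p hp ⟨hne, rfl⟩
  obtain ⟨h1, h2⟩ := mem_product.mp hp
  exact hx (mem_image_of_mem _ (mem_offDiag.mpr ⟨h1, h2, hne⟩))

theorem diffCount_eq_one_of_mem_image
    (hinj : Set.InjOn (fun p : G × G => p.1 - p.2) A.offDiag)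
    (hx : x ∈ A.offDiag.image (fun p => p.1 - p.2)) : diffCount A x = 1 := by
  obtain ⟨p, hp, rfl⟩ := mem_image.mp hx
  rw [diffCount, card_eq_one]
  refine ⟨p, eq_singleton_iff_unique_mem.mpr ⟨?_, fun q hq => ?_⟩⟩
  · obtain ⟨h1, h2, hne⟩ := mem_offDiag.mp hp
    exact mem_filter.mpr ⟨mem_product.mpr ⟨h1, h2⟩, hne, rfl⟩
  · obtain ⟨hq, hne, hqp⟩ := mem_filter.mp hq
    exact hinj (mem_offDiag.mpr ⟨(mem_product.mp hq).1, (mem_product.mp hq).2, hne⟩) hp hqp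

end DiffCount

section CharFour

variable {R : Type*} [CommRing R]

theorem sq_eq_sq_of_sub_mem_span_two (h4 : (4 : R) = 0) {a b : R}
    (h : a - b ∈ Ideal.span {(2 : R)}) : a ^ 2 = b ^ 2 := by
  obtain ⟨c, hc⟩ := Ideal.mem_span_singleton.mp h
  obtain rfl : a = b + 2 * c := by linear_combination hc
  linear_combination (b * c + c ^ 2) * h4

theorem add_pow_two_pow_succ (h4 : (4 : R) = 0) (a b : R) (m : ℕ) :
    (a + b) ^ 2 ^ (m + 1) = a ^ 2 ^ (m + 1) + b ^ 2 ^ (m + 1) + 2 * (a * b) ^ 2 ^ m := by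
  induction m with
  | zero => ring
  | succ n ih =>
    rw [pow_succ 2 (n + 1), pow_mul, pow_mul, pow_mul, mul_pow a b, ih]
    linear_combination
      (a ^ 2 ^ (n + 1) + b ^ 2 ^ (n + 1) + (a * b) ^ 2 ^ n) * (a * b) ^ 2 ^ n * h4

theorem eq_of_sub_mem_span_two_of_pow_eq_self (h4 : (4 : R) = 0) {r : ℕ} (hr : r ≠ 0)
    {a b : R} (ha : a ^ 2 ^ r = a) (hb : b ^ 2 ^ r = b)
    (h : a - b ∈ Ideal.span {(2 : R)}) : a = b := by
  obtain ⟨m, rfl⟩ := Nat.exists_eq_succ_of_ne_zero hr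
  rw [← ha, ← hb, pow_succ', pow_mul, pow_mul, sq_eq_sq_of_sub_mem_span_two h4 h]

end CharFour

section LocalCharFour

variable {R : Type*} [CommRing R] [IsLocalRing R]

theorem mem_span_two_of_two_mul_eq_zero (h2 : (2 : R) ≠ 0)
    (hmax : IsLocalRing.maximalIdeal R = Ideal.span {(2 : R)}) {x : R} (hx : 2 * x = 0) :
    x ∈ Ideal.span {(2 : R)} := by
  rw [← hmax, IsLocalRing.mem_maximalIdeal, mem_nonunits_iff]
  rintro ⟨u, rfl⟩
  exact h2 (by simpa using congrArg (· * ((u⁻¹ : Rˣ) : R)) hx)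

variable (h4 : (4 : R) = 0) (h2 : (2 : R) ≠ 0)
  (hmax : IsLocalRing.maximalIdeal R = Ideal.span {(2 : R)}) {r : ℕ} (hr : r ≠ 0)
include h4 h2 hmax hr

theorem mul_eq_mul_of_add_eq_add {a b a' b' : R} (ha : a ^ 2 ^ r = a) (hb : b ^ 2 ^ r = b)
    (ha' : a' ^ 2 ^ r = a') (hb' : b' ^ 2 ^ r = b') (h : a + b = a' + b') :
    a * b = a' * b' := by
  obtain ⟨m, rfl⟩ := Nat.exists_eq_succ_of_ne_zero hr
  have expand := add_pow_two_pow_succ h4 a b m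
  have expand' := add_pow_two_pow_succ h4 a' b' m
  rw [ha, hb, h] at expand
  rw [ha', hb'] at expand'
  have htwo : 2 * ((a * b) ^ 2 ^ m - (a' * b') ^ 2 ^ m) = 0 := by
    linear_combination expand' - expand
  have hsq := sq_eq_sq_of_sub_mem_span_two h4 (mem_span_two_of_two_mul_eq_zero h2 hmax htwo)
  rwa [← pow_mul, ← pow_mul, ← pow_succ, mul_pow, mul_pow, ha, hb, ha', hb'] at hsq

theorem eq_and_eq_of_sub_eq_sub {a b a' b' : R} (ha : a ^ 2 ^ r = a) (hb : b ^ 2 ^ r = b)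
    (ha' : a' ^ 2 ^ r = a') (hb' : b' ^ 2 ^ r = b') (hne : a ≠ b) (h : a - b = a' - b') :
    a = a' ∧ b = b' := by
  have hsum : a + b' = a' + b := by linear_combination h
  have hprod := mul_eq_mul_of_add_eq_add h4 h2 hmax hr ha hb' ha' hb hsum
  have hunit : IsUnit (a - b) := by
    rw [← IsLocalRing.notMem_maximalIdeal, hmax]
    exact fun hmem => hne (eq_of_sub_mem_span_two_of_pow_eq_self h4 hr ha hb hmem)
  have hzero : (a - a') * (a - b) = 0 := by linear_combination a * hsum - hprod
  have haa' : a = a' := sub_eq_zero.mp ((hunit.mul_left_eq_zero).mp hzero)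
  exact ⟨haa', by linear_combination haa' - h⟩

theorem injOn_sub_offDiag [DecidableEq R] {T : Finset R} (hT : ∀ t ∈ T, t ^ 2 ^ r = t) :
    Set.InjOn (fun p : R × R => p.1 - p.2) T.offDiag := by
  rintro ⟨a, b⟩ hab ⟨a', b'⟩ hab' h
  obtain ⟨ha, hb, hne⟩ := mem_offDiag.mp hab
  obtain ⟨ha', hb', -⟩ := mem_offDiag.mp hab'
  obtain ⟨rfl, rfl⟩ :=
    eq_and_eq_of_sub_eq_sub h4 h2 hmax hr (hT a ha) (hT b hb) (hT a' ha') (hT b' hb') hne h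
  rfl

theorem mem_image_sub_offDiag_iff [Fintype R] [DecidableEq R] (hcard : Fintype.card R = 4 ^ r)
    {T : Finset R} (hTcard : #T = 2 ^ r) (hT : ∀ t ∈ T, t ^ 2 ^ r = t) (x : R) :
    x ∈ T.offDiag.image (fun p => p.1 - p.2) ↔ x ∉ Ideal.span {(2 : R)} := by
  classical
  suffices T.offDiag.image (fun p => p.1 - p.2) = univ.filter (· ∉ Ideal.span {(2 : R)}) by
    simp [this]
  have hsub : T.offDiag.image (fun p => p.1 - p.2) ⊆ univ.filter (· ∉ Ideal.span {(2 : R)}) := by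
    intro y hy
    obtain ⟨⟨a, b⟩, hab, rfl⟩ := mem_image.mp hy
    obtain ⟨ha, hb, hne⟩ := mem_offDiag.mp hab
    exact mem_filter.mpr ⟨mem_univ _, fun h =>
      hne (eq_of_sub_mem_span_two_of_pow_eq_self h4 hr (hT a ha) (hT b hb) h)⟩
  have hideal : 2 ^ r ≤ #(univ.filter (· ∈ Ideal.span {(2 : R)})) := by
    have hinj : Set.InjOn (2 * ·) (T : Set R) := fun s hs t ht hst =>
      eq_of_sub_mem_span_two_of_pow_eq_self h4 hr (hT s hs) (hT t ht)
        (mem_span_two_of_two_mul_eq_zero h2 hmax (by linear_combination hst))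
    calc 2 ^ r = #(T.image (2 * ·)) := by rw [card_image_of_injOn hinj, hTcard]
      _ ≤ _ := card_le_card fun y hy => by
        obtain ⟨t, -, rfl⟩ := mem_image.mp hy
        exact mem_filter.mpr ⟨mem_univ _, Ideal.mem_span_singleton.mpr (dvd_mul_right 2 t)⟩
  have hsplit := card_filter_add_card_filter_not (s := univ) (· ∈ Ideal.span {(2 : R)})
  rw [card_univ, hcard, show 4 ^ r = 2 ^ r * 2 ^ r by rw [← mul_pow]; norm_num] at hsplit
  refine eq_of_subset_of_card_le hsub ?_
  rw [card_image_of_injOn (injOn_sub_offDiag h4 h2 hmax hr hT), offDiag_card, hTcard]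
  omega

end LocalCharFour

section PowersOfUnit

variable {M : Type*} [MonoidWithZero M] [DecidableEq M] (ξ : Mˣ)

theorem pow_orderOf_add_one_eq_self_of_mem {t : M}
    (ht : t ∈ insert 0 ((range (orderOf ξ)).image fun i => (ξ : M) ^ i)) :
    t ^ (orderOf ξ + 1) = t := by
  rcases mem_insert.mp ht with rfl | ht
  · exact zero_pow (Nat.succ_ne_zero _)
  obtain ⟨i, -, rfl⟩ := mem_image.mp ht
  rw [pow_succ, ← pow_mul, mul_comm, pow_mul, ← orderOf_units, pow_orderOf_eq_one, one_pow,
    one_mul]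

theorem card_insert_zero_image_pow [Nontrivial M] :
    #(insert 0 ((range (orderOf ξ)).image fun i => (ξ : M) ^ i)) = orderOf ξ + 1 := by
  rw [card_insert_of_notMem, card_image_of_injOn, card_range]
  · rw [coe_range, ← orderOf_units]
    exact pow_injOn_Iio_orderOf
  · intro h
    obtain ⟨i, -, hi⟩ := mem_image.mp h
    exact (ξ ^ i).ne_zero (by rw [Units.val_pow_eq_pow_val, hi])

end PowersOfUnit

/-- In `GR(4, r)` with `r ≥ 2`, the Teichmüller set `T` is a
`(2^r, 2^r, 2^r, 1)` relative difference set in `(GR(4,r), +)` relative to the maximal ideal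
`I = 2·GR(4,r)`: every element outside `I` has exactly one representation as a difference of
two distinct elements of `T`, and no nonzero element of `I` has such a representation. -/
theorem stmt14 {R : Type*} [CommRing R] [Fintype R] [IsLocalRing R] [DecidableEq R]
    (r : ℕ) (hr : 2 ≤ r)
    (hchar : CharP R 4)
    (hmax : IsLocalRing.maximalIdeal R = Ideal.span {(2 : R)})
    (hcard : Fintype.card R = 4 ^ r)
    (ξ : Rˣ) (hξ : orderOf ξ = 2 ^ r - 1)
    (T : Finset R)
    (hT : T = insert (0 : R) ((Finset.range (2 ^ r - 1)).image (fun i => (ξ : R) ^ i))) :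
    (∀ x : R, x ∉ Ideal.span {(2 : R)} → diffCount T x = 1) ∧
    (∀ x : R, x ∈ Ideal.span {(2 : R)} → x ≠ 0 → diffCount T x = 0) := by
  have hr0 : r ≠ 0 := by omega
  have h4 : (4 : R) = 0 := by exact_mod_cast CharP.cast_eq_zero R 4
  have h2 : (2 : R) ≠ 0 := fun h => by
    have := (CharP.cast_eq_zero_iff R 4 2).mp (by exact_mod_cast h)
    omega
  have horder : orderOf ξ + 1 = 2 ^ r := by
    have := Nat.one_le_two_pow (n := r)
    omega
  rw [← hξ] at hT
  have hTcard : #T = 2 ^ r := by rw [hT, card_insert_zero_image_pow, horder]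
  have hfix : ∀ t ∈ T, t ^ 2 ^ r = t := fun t ht =>
    horder ▸ pow_orderOf_add_one_eq_self_of_mem ξ (hT ▸ ht)
  have hdiff := mem_image_sub_offDiag_iff h4 h2 hmax hr0 hcard hTcard hfix
  exact ⟨fun x hx => diffCount_eq_one_of_mem_image (injOn_sub_offDiag h4 h2 hmax hr0 hfix)
      ((hdiff x).mpr hx),
    fun x hx _ => diffCount_eq_zero_of_notMem_image fun h => (hdiff x).mp h hx⟩
end

section
/- Let p be an odd prime and r ≥ 1 with (p, r) ≠ (3, 1), and let T^* be the Teichmüller group of GR(p^2, r). Then no element d of the multiset ΔT^* has multiplicity p^r - 2 in ΔT^*; equivalently, for every d, the intersection number |T^* ∩ (T^* + d)| is strictly less than p^r - 2 whenever d ≠ 0. -/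
/-!
Since `-1 ∈ T*`, the involution `(x, y) ↦ (-y, -x)` acts on the representations `x - y = d`;
if `d` had the odd multiplicity `p^r - 2`, it would have a fixed point, so `d = 2a` with
`a ∈ T*`, and scaling by `a⁻¹` gives `2` the same multiplicity. Then every element of `T*` but
one, `w`, has `t - 2 ∈ T*`. Distinct elements of `T*` are incongruent mod `p`, so `t` and
`t - 2p` never both lie in `T*`, and `T*` is forced to be the progression
`w, w + 2, …, w + 2(p^r - 2)`. Its terms `w` and `w + 2p` are congruent mod `p`, hence
`p^r - 1 ≤ p` and `r = 1`. For `r = 1`, the symmetry `T* = -T*` gives `∑ T* = 0`, which pins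
down `w = 2 - p`, and then `w² ∈ T*` is impossible for `p ≥ 5`.

For the second claim, `|T* ∩ (T* + d)|` is the multiplicity of `d`, which cannot be `p^r - 1`:
`T* + d = T*` would give `(p^r - 1) d = 0`.
-/

open Finset

section AddCommGroup

variable {G : Type*} [AddCommGroup G] [DecidableEq G] {A : Finset G} {d s w : G} {m : ℕ}

theorem diffCount_zero (A : Finset G) : diffCount A 0 = 0 := by
  simp [diffCount, sub_eq_zero]

theorem mem_inter_image_add {x : G} : x ∈ A ∩ A.image (· + d) ↔ x ∈ A ∧ x - d ∈ A := by
  rw [mem_inter, mem_image]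
  refine and_congr_right fun _ => ⟨?_, fun h => ⟨x - d, h, sub_add_cancel x d⟩⟩
  rintro ⟨y, hy, rfl⟩
  simpa using hy

theorem card_inter_image_add_eq_diffCount (hd : d ≠ 0) :
    #(A ∩ A.image (· + d)) = diffCount A d := by
  refine card_nbij' (fun x => (x, x - d)) Prod.fst (fun x hx => ?_) (fun q hq => ?_)
    (fun _ _ => rfl) (fun q hq => ?_)
  · obtain ⟨hxA, hxd⟩ := mem_inter_image_add.1 hx
    simp only [coe_filter, mem_product]
    exact ⟨⟨hxA, hxd⟩, fun h => hd (sub_eq_self.1 h.symm), sub_sub_cancel x d⟩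
  · simp only [coe_filter, mem_product] at hq
    obtain ⟨⟨hx, hy⟩, -, rfl⟩ := hq
    exact mem_inter_image_add.2 ⟨hx, by rwa [sub_sub_cancel]⟩
  · simp only [coe_filter, mem_product] at hq
    obtain ⟨-, -, rfl⟩ := hq
    exact Prod.ext rfl (sub_sub_cancel _ _)

theorem diffCount_lt_card (hd : #A • d ≠ 0) : diffCount A d < #A := by
  have hd0 : d ≠ 0 := by rintro rfl; simp at hd
  rw [← card_inter_image_add_eq_diffCount hd0]
  refine (card_le_card inter_subset_left).lt_of_ne fun h => hd ?_
  have hsub : A ⊆ A.image (· + d) :=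
    inter_eq_left.1 (eq_of_subset_of_card_le inter_subset_left h.ge)
  have hsum : ∑ x ∈ A.image (· + d), x = ∑ x ∈ A, (x + d) :=
    sum_image (add_left_injective d).injOn
  rw [← eq_of_subset_of_card_le hsub card_image_le, sum_add_distrib, sum_const] at hsum
  simpa using hsum

theorem exists_two_nsmul_eq_of_odd_diffCount (hneg : ∀ x ∈ A, -x ∈ A)
    (hodd : Odd (diffCount A d)) : ∃ a ∈ A, 2 • a = d := by
  have hd : d ≠ 0 := by rintro rfl; simp [diffCount_zero] at hodd
  set B := A ∩ A.image (· + d)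
  have hB : ∀ x ∈ B, d - x ∈ B := fun x hx => by
    rw [mem_inter_image_add] at hx ⊢
    exact ⟨by simpa using hneg _ hx.2, by simpa using hneg _ hx.1⟩
  have hinv : Function.Involutive fun x : B => (⟨d - x, hB x x.2⟩ : B) := fun x => by simp
  obtain ⟨⟨x, hx⟩, hfix⟩ := Equiv.Perm.exists_fixed_point_of_prime (n := 1) (σ := hinv.toPerm)
    (by rw [Fintype.card_coe, card_inter_image_add_eq_diffCount hd]; exact hodd.not_two_dvd_nat)
    (by rw [pow_one, sq]; exact Equiv.ext hinv)
  refine ⟨x, (mem_inter_image_add.1 hx).1, ?_⟩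
  rw [two_nsmul]
  exact eq_sub_iff_add_eq.1 (congrArg Subtype.val hfix).symm

/-- Otherwise `A.erase w` is closed under `· - s`, so it would contain both `t` and
`t - m • s`. -/
theorem add_mem_of_one_lt_card (hgap : ∀ t ∈ A, t - m • s ∉ A) (hw : w ∈ A)
    (hpred : ∀ t ∈ A, t ≠ w → t - s ∈ A) (hA : 1 < #A) : w + s ∈ A := by
  by_contra hws
  have hclosed : ∀ x ∈ A.erase w, x - s ∈ A.erase w := fun x hx => by
    obtain ⟨hxw, hxA⟩ := mem_erase.1 hx
    exact mem_erase.2 ⟨fun h => hws (by rwa [← h, sub_add_cancel]), hpred x hxA hxw⟩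
  obtain ⟨t, ht⟩ : (A.erase w).Nonempty := by
    rw [← card_pos, card_erase_of_mem hw]
    omega
  have hiter : ∀ k : ℕ, t - k • s ∈ A.erase w := fun k => by
    induction k with
    | zero => rwa [zero_smul, sub_zero]
    | succ k ihk => simpa [succ_nsmul, sub_add_eq_sub_sub] using hclosed _ ihk
  exact hgap t (mem_of_mem_erase ht) (mem_of_mem_erase (hiter m))

theorem eq_image_range_add_nsmul (hgap : ∀ t ∈ A, t - m • s ∉ A) (hw : w ∈ A)
    (hpred : ∀ t ∈ A, t ≠ w → t - s ∈ A) : A = (range #A).image fun k => w + k • s := by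
  induction h : #A generalizing A w with
  | zero => simp_all
  | succ n ih =>
    rcases n.eq_zero_or_pos with rfl | hn
    · obtain ⟨a, rfl⟩ := card_eq_one.1 h
      simp_all
    have hws := add_mem_of_one_lt_card hgap hw hpred (by omega)
    have hs : w + s ≠ w := fun h => hgap w hw (by simp [add_eq_left.1 h, hw])
    have hrest := ih (A := A.erase w) (w := w + s)
      (fun t ht h' => hgap t (mem_of_mem_erase ht) (mem_of_mem_erase h'))
      (mem_erase.2 ⟨hs, hws⟩)
      (fun t ht htw => mem_erase.2 ⟨fun h => htw (by rw [← h, sub_add_cancel]),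
        hpred t (mem_of_mem_erase ht) (ne_of_mem_erase ht)⟩)
      (by rw [card_erase_of_mem hw, h]; rfl)
    rw [← insert_erase hw, hrest, range_add_one', image_insert, map_eq_image, image_image,
      zero_smul, add_zero]
    congr 1
    refine image_congr fun k _ => ?_
    change w + s + k • s = w + (k + 1) • s
    rw [succ_nsmul', add_assoc]

theorem exists_eq_image_range_of_card_inter_image_add (hgap : ∀ t ∈ A, t - m • s ∉ A)
    (hcard : #(A ∩ A.image (· + s)) + 1 = #A) :
    ∃ w, A = (range #A).image fun k => w + k • s := by
  obtain ⟨w, hw⟩ : ∃ w, A \ A.image (· + s) = {w} := by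
    rw [← card_eq_one]
    have := card_sdiff_add_card_inter A (A.image (· + s))
    omega
  have hwA : w ∈ A := (mem_sdiff.1 (hw ▸ mem_singleton_self w)).1
  refine ⟨w, eq_image_range_add_nsmul hgap hwA fun t ht htw => ?_⟩
  have ht' : t ∉ A \ A.image (· + s) := by
    rw [hw]
    exact mt mem_singleton.1 htw
  rw [mem_sdiff, not_and_not_right] at ht'
  exact (mem_inter_image_add.1 (mem_inter.2 ⟨ht, ht' ht⟩)).2

theorem card_le_of_eq_image_range_add_nsmul (hgap : ∀ t ∈ A, t - m • s ∉ A)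
    (hA : A = (range #A).image fun k => w + k • s) : #A ≤ m := by
  by_contra! h
  have hmem : ∀ k < #A, w + k • s ∈ A := fun k hk => by
    rw [hA]
    exact mem_image_of_mem _ (mem_range.2 hk)
  exact hgap _ (hmem m h) (by simpa using hmem 0 (by omega))

end AddCommGroup

section CommRing

variable {R : Type*} [CommRing R] {p : ℕ}

theorem diffCount_units_mul [DecidableEq R] {A : Finset R} {u : Rˣ}
    (hA : ∀ x, (u : R) * x ∈ A ↔ x ∈ A) (d : R) : diffCount A (u * d) = diffCount A d := by
  refine card_nbij' (fun q => (((u⁻¹ : Rˣ) : R) * q.1, ((u⁻¹ : Rˣ) : R) * q.2))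
    (fun q => ((u : R) * q.1, (u : R) * q.2))
    (fun q hq => ?_) (fun q hq => ?_) (fun q _ => by simp) (fun q _ => by simp)
  all_goals
    simp only [coe_filter, mem_product] at hq ⊢
    obtain ⟨⟨hx, hy⟩, hxy, hd⟩ := hq
  · refine ⟨⟨(hA _).1 (by simpa using hx), (hA _).1 (by simpa using hy)⟩,
      (Units.isUnit _).mul_right_injective.ne hxy, ?_⟩
    rw [← mul_sub, hd, Units.inv_mul_cancel_left]
  · exact ⟨⟨(hA _).2 hx, (hA _).2 hy⟩, (Units.isUnit _).mul_right_injective.ne hxy,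
      by rw [← mul_sub, hd]⟩

theorem isUnit_natCast_of_coprime {m k : ℕ} [CharP R m] (h : k.Coprime m) : IsUnit (k : R) :=
  @isUnit_of_invertible _ _ _ (invertibleOfCoprime h)

theorem sum_eq_zero_of_neg_mem {A : Finset R} (h2 : IsUnit (2 : R))
    (hneg : ∀ x ∈ A, -x ∈ A) : ∑ x ∈ A, x = 0 := by
  have hsymm : ∑ x ∈ A, x = -∑ x ∈ A, x := by
    rw [← sum_neg_distrib]
    exact sum_nbij' Neg.neg Neg.neg hneg hneg (fun _ _ => neg_neg _) (fun _ _ => neg_neg _)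
      (fun _ _ => (neg_neg _).symm)
  exact h2.mul_right_eq_zero.1 (by linear_combination hsymm)

theorem pow_eq_one_of_sub_one_mem_span (hp : (p : R) ^ 2 = 0) {u : R}
    (h : u - 1 ∈ Ideal.span {(p : R)}) : u ^ p = 1 := by
  obtain ⟨c, hc⟩ := Ideal.mem_span_singleton'.1 h
  have hz : (c * p) ^ 2 = 0 := by rw [mul_pow, hp, mul_zero]
  have := Polynomial.eval_add_of_sq_eq_zero (Polynomial.X ^ p) 1 (c * p) hz
  simp only [Polynomial.eval_pow, Polynomial.eval_X, one_pow, Polynomial.derivative_X_pow,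
    map_natCast, Polynomial.eval_mul, Polynomial.eval_natCast, mul_one] at this
  rw [← sub_add_cancel u 1, ← hc, add_comm, this]
  linear_combination c * hp

theorem eq_one_of_sub_one_mem_span (hp : (p : R) ^ 2 = 0) {n : ℕ} (hpn : p.Coprime n) {u : R}
    (hu : u ^ n = 1) (h : u - 1 ∈ Ideal.span {(p : R)}) : u = 1 := by
  simpa [hpn.gcd_eq_one] using pow_gcd_eq_one.2 ⟨pow_eq_one_of_sub_one_mem_span hp h, hu⟩

theorem Units.eq_of_sub_mem_span (hp : (p : R) ^ 2 = 0) {n : ℕ} (hpn : p.Coprime n) {x y : Rˣ}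
    (hx : x ^ n = 1) (hy : y ^ n = 1) (h : (x : R) - y ∈ Ideal.span {(p : R)}) : x = y := by
  rw [← _root_.mul_inv_eq_one]
  refine Units.ext (eq_one_of_sub_one_mem_span hp hpn ?_ ?_)
  · rw [← Units.val_pow_eq_pow_val, mul_pow, hx, inv_pow, hy, inv_one, mul_one, Units.val_one]
  · have : ((x * y⁻¹ : Rˣ) : R) - 1 = ((x : R) - y) * ↑y⁻¹ := by simp [sub_mul]
    rw [this]
    exact Ideal.mul_mem_right _ _ h

/-- `∑ A = 0` forces `w = 2 - p`, and then `w² ∈ A` would give `(p - 1)(p - 2) = 2k` with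
`k < p - 1`. -/
theorem ne_image_range_add_nsmul_two [DecidableEq R] [CharP R (p ^ 2)] (hp : Odd p)
    (h5 : 5 ≤ p) {A : Finset R} (hmul : ∀ x ∈ A, ∀ y ∈ A, x * y ∈ A)
    (hneg : ∀ x ∈ A, -x ∈ A) (hcard : #A = p - 1) (w : R) :
    A ≠ (range (p - 1)).image fun k => w + k • 2 := by
  intro hA
  have h2 : IsUnit (2 : R) := by
    exact_mod_cast isUnit_natCast_of_coprime (R := R) ((Nat.coprime_two_left.2 hp).pow_right 2)
  have hsum := sum_eq_zero_of_neg_mem h2 hneg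
  have hn1 : IsUnit ((p - 1 : ℕ) : R) := isUnit_natCast_of_coprime
    (((Nat.coprime_self_sub_left (by omega)).2 (Nat.coprime_one_left p)).pow_right 2)
  obtain ⟨m, hm⟩ : ∃ m, p - 1 = m + 1 := ⟨p - 2, by omega⟩
  rw [hm] at hA hcard hn1
  have hinj : Set.InjOn (fun k : ℕ => w + k • (2 : R)) (range (m + 1)) :=
    card_image_iff.1 (by rw [← hA, hcard, card_range])
  have hid : ((∑ i ∈ range (m + 1), i : ℕ) : R) * 2 = (m + 1) * m := by
    exact_mod_cast congrArg (Nat.cast (R := R)) (sum_range_id_mul_two (m + 1))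
  rw [hA, sum_image hinj, sum_add_distrib, sum_const, card_range, ← sum_smul, nsmul_eq_mul,
    nsmul_eq_mul] at hsum
  have hw : w = -m := by
    have key : ((m + 1 : ℕ) : R) * (w + m) = 0 := by
      push_cast at hsum hid ⊢
      linear_combination hsum - hid
    linear_combination hn1.mul_right_eq_zero.1 key
  have hwA : w ∈ A := by
    rw [hA]
    exact mem_image.2 ⟨0, mem_range.2 (by omega), by simp⟩
  have hww := hmul w hwA w hwA
  rw [hA] at hww
  obtain ⟨k, hk, hkw⟩ := mem_image.1 hww
  rw [mem_range] at hk
  have hcast : ((m * (m + 1) : ℕ) : R) = ((2 * k : ℕ) : R) := by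
    rw [nsmul_eq_mul, hw] at hkw
    push_cast
    linear_combination -hkw
  have hpm : p = m + 2 := by omega
  have := CharP.natCast_injOn_Iio R (p ^ 2) (by rw [Set.mem_Iio, hpm]; nlinarith)
    (by rw [Set.mem_Iio, hpm]; nlinarith) hcast
  nlinarith

end CommRing

section UnitPowers

variable {R : Type*} [CommRing R] [DecidableEq R] {ξ : Rˣ} {x y : R} {p : ℕ}

/-- The Teichmüller group `T*`, when `ξ` generates it. -/
noncomputable def unitPowers (ξ : Rˣ) : Finset R :=
  (range (orderOf ξ)).image fun i => (ξ : R) ^ i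

theorem card_unitPowers (ξ : Rˣ) : #(unitPowers ξ) = orderOf ξ := by
  rw [unitPowers, card_image_of_injOn, card_range]
  intro i hi j hj hij
  refine pow_injOn_Iio_orderOf (x := ξ) (by simpa using hi) (by simpa using hj) (Units.ext ?_)
  simpa using hij

theorem exists_pow_eq_of_mem_unitPowers (hx : x ∈ unitPowers ξ) :
    ∃ i < orderOf ξ, ((ξ ^ i : Rˣ) : R) = x := by
  simpa [unitPowers] using hx

theorem pow_mem_unitPowers (hξ : IsOfFinOrder ξ) (i : ℕ) : ((ξ ^ i : Rˣ) : R) ∈ unitPowers ξ :=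
  mem_image.2 ⟨i % orderOf ξ, mem_range.2 (Nat.mod_lt _ hξ.orderOf_pos), by
    rw [← Units.val_pow_eq_pow_val, pow_mod_orderOf]⟩

theorem mul_mem_unitPowers (hx : x ∈ unitPowers ξ) (hy : y ∈ unitPowers ξ) :
    x * y ∈ unitPowers ξ := by
  obtain ⟨i, hi, rfl⟩ := exists_pow_eq_of_mem_unitPowers hx
  obtain ⟨j, -, rfl⟩ := exists_pow_eq_of_mem_unitPowers hy
  rw [← Units.val_mul, ← pow_add]
  exact pow_mem_unitPowers (orderOf_pos_iff.1 (by omega)) _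

theorem neg_mem_unitPowers (h : (-1 : R) ∈ unitPowers ξ) (hx : x ∈ unitPowers ξ) :
    -x ∈ unitPowers ξ := by
  simpa using mul_mem_unitPowers h hx

theorem units_pow_mul_mem_unitPowers_iff (hξ : IsOfFinOrder ξ) (i : ℕ) :
    ((ξ ^ i : Rˣ) : R) * x ∈ unitPowers ξ ↔ x ∈ unitPowers ξ := by
  refine ⟨fun h => ?_, mul_mem_unitPowers (pow_mem_unitPowers hξ i)⟩
  obtain ⟨j, hj : ξ ^ j = (ξ ^ i)⁻¹⟩ :=
    hξ.mem_powers_iff_mem_zpowers.2 (inv_mem (Subgroup.npow_mem_zpowers ξ i))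
  have hx : x = ((ξ ^ j : Rˣ) : R) * (((ξ ^ i : Rˣ) : R) * x) := by
    rw [← mul_assoc, ← Units.val_mul, hj, inv_mul_cancel, Units.val_one, one_mul]
  exact hx ▸ mul_mem_unitPowers (pow_mem_unitPowers hξ j) h

theorem eq_of_mem_unitPowers_of_sub_mem_span (hp : (p : R) ^ 2 = 0)
    (hpn : p.Coprime (orderOf ξ)) (hx : x ∈ unitPowers ξ) (hy : y ∈ unitPowers ξ)
    (h : x - y ∈ Ideal.span {(p : R)}) : x = y := by
  obtain ⟨i, -, rfl⟩ := exists_pow_eq_of_mem_unitPowers hx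
  obtain ⟨j, -, rfl⟩ := exists_pow_eq_of_mem_unitPowers hy
  have hroot (k : ℕ) : (ξ ^ k) ^ orderOf ξ = 1 := by
    rw [pow_right_comm, pow_orderOf_eq_one, one_pow]
  exact congrArg Units.val (Units.eq_of_sub_mem_span hp hpn (hroot i) (hroot j) h)

theorem neg_one_mem_unitPowers [IsLocalRing R]
    (hmax : IsLocalRing.maximalIdeal R = Ideal.span {(p : R)}) (hp : (p : R) ^ 2 = 0)
    (hpn : p.Coprime (orderOf ξ)) (hξ : IsOfFinOrder ξ) (heven : Even (orderOf ξ)) :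
    (-1 : R) ∈ unitPowers ξ := by
  have hn := hξ.orderOf_pos
  set η := ξ ^ (orderOf ξ / 2)
  have hη1 : η ≠ 1 := pow_ne_one_of_lt_orderOf (by grind) (Nat.div_lt_self hn one_lt_two)
  have hη2 : (η : R) ^ 2 = 1 := by
    rw [← Units.val_pow_eq_pow_val, ← pow_mul, Nat.div_mul_cancel heven.two_dvd,
      pow_orderOf_eq_one, Units.val_one]
  have hunit : IsUnit ((η : R) - 1) := by
    by_contra h
    have h := (IsLocalRing.mem_maximalIdeal _).2 h
    rw [hmax] at h
    refine hη1 (Units.eq_of_sub_mem_span hp hpn ?_ (one_pow _) (by simpa using h))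
    rw [pow_right_comm, pow_orderOf_eq_one, one_pow]
  have hη : (η : R) = -1 := by
    have h0 : ((η : R) - 1) * ((η : R) + 1) = 0 := by linear_combination hη2
    linear_combination hunit.mul_right_eq_zero.1 h0
  exact hη ▸ pow_mem_unitPowers hξ _

theorem sub_nsmul_two_notMem_unitPowers [CharP R (p ^ 2)] (hp : 2 < p)
    (hpn : p.Coprime (orderOf ξ)) (hx : x ∈ unitPowers ξ) : x - p • 2 ∉ unitPowers ξ := by
  intro h
  have hp2 : (p : R) ^ 2 = 0 := by exact_mod_cast CharP.cast_eq_zero R (p ^ 2)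
  have heq := eq_of_mem_unitPowers_of_sub_mem_span hp2 hpn hx h (by
    rw [sub_sub_cancel, nsmul_eq_mul]
    exact Ideal.mul_mem_right _ _ (Ideal.mem_span_singleton_self _))
  have h2p : ((p * 2 : ℕ) : R) = 0 := by
    rw [Nat.cast_mul, Nat.cast_ofNat, ← nsmul_eq_mul]
    exact sub_eq_self.1 heq.symm
  rw [CharP.cast_eq_zero_iff R (p ^ 2), sq] at h2p
  have := Nat.le_of_dvd two_pos (Nat.dvd_of_mul_dvd_mul_left (by omega) h2p)
  omega

theorem exists_eq_image_range_of_diffCount_add_one_eq [CharP R (p ^ 2)] (hp : 2 < p)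
    (hpn : p.Coprime (orderOf ξ)) (heven : Even (orderOf ξ)) (hneg : (-1 : R) ∈ unitPowers ξ)
    {d : R} (hd : diffCount (unitPowers ξ) d + 1 = orderOf ξ) :
    ∃ w, unitPowers ξ = (range (orderOf ξ)).image fun k => w + k • 2 := by
  have hξ : IsOfFinOrder ξ := orderOf_pos_iff.1 (by omega)
  obtain ⟨a, ha, rfl⟩ := exists_two_nsmul_eq_of_odd_diffCount
    (fun _ => neg_mem_unitPowers hneg) (Nat.not_even_iff_odd.1 (Nat.even_add_one.1 (hd ▸ heven)))
  obtain ⟨i, -, rfl⟩ := exists_pow_eq_of_mem_unitPowers ha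
  rw [nsmul_eq_mul, mul_comm, Nat.cast_ofNat,
    diffCount_units_mul fun _ => units_pow_mul_mem_unitPowers_iff hξ i] at hd
  have h2 : (2 : R) ≠ 0 := fun h => by
    have := (CharP.cast_eq_zero_iff R (p ^ 2) 2).1 (by exact_mod_cast h)
    nlinarith [Nat.le_of_dvd two_pos this]
  rw [← card_unitPowers ξ] at hd ⊢
  exact exists_eq_image_range_of_card_inter_image_add
    (fun _ => sub_nsmul_two_notMem_unitPowers hp hpn)
    (by rw [card_inter_image_add_eq_diffCount h2, hd])

theorem orderOf_le_of_eq_image_range [CharP R (p ^ 2)] (hp : 2 < p)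
    (hpn : p.Coprime (orderOf ξ)) {w : R}
    (hw : unitPowers ξ = (range (orderOf ξ)).image fun k => w + k • 2) : orderOf ξ ≤ p :=
  card_unitPowers ξ ▸ card_le_of_eq_image_range_add_nsmul
    (fun _ => sub_nsmul_two_notMem_unitPowers hp hpn) (card_unitPowers ξ ▸ hw)

theorem diffCount_unitPowers_lt_orderOf [CharP R (p ^ 2)] (hpn : p.Coprime (orderOf ξ))
    {d : R} (hd : d ≠ 0) : diffCount (unitPowers ξ) d < orderOf ξ :=
  card_unitPowers ξ ▸ diffCount_lt_card (by
    rw [card_unitPowers, nsmul_eq_mul]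
    exact mt (isUnit_natCast_of_coprime (hpn.symm.pow_right 2)).mul_right_eq_zero.1 hd)

end UnitPowers

theorem stmt18_general {R : Type*} [CommRing R] [IsLocalRing R] [DecidableEq R]
    (p r : ℕ) (hp : p.Prime) (hodd : Odd p) (hr : 1 ≤ r) (hpr : ¬(p = 3 ∧ r = 1))
    (hchar : CharP R (p ^ 2))
    (hmax : IsLocalRing.maximalIdeal R = Ideal.span {(p : R)})
    (ξ : Rˣ) (hξ : orderOf ξ = p ^ r - 1)
    (Tstar : Finset R)
    (hTstar : Tstar = (Finset.range (p ^ r - 1)).image (fun i => (ξ : R) ^ i)) :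
    (∀ d : R, diffCount Tstar d ≠ p ^ r - 2) ∧
    (∀ d : R, d ≠ 0 → (Tstar ∩ Tstar.image (fun t => t + d)).card < p ^ r - 2) := by
  obtain rfl : Tstar = unitPowers ξ := by rw [hTstar, unitPowers, hξ]
  have hp3 : 3 ≤ p := by have := hp.two_le; grind
  have hpow : p ≤ p ^ r := Nat.le_self_pow (by omega) p
  have hpn : p.Coprime (orderOf ξ) := hξ ▸ (((Nat.coprime_self_sub_left (by omega)).2
    (Nat.coprime_one_left _)).coprime_dvd_right (dvd_pow_self p (by omega))).symm
  have heven : Even (orderOf ξ) := hξ ▸ Nat.Odd.sub_odd hodd.pow odd_one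
  have hneg : (-1 : R) ∈ unitPowers ξ := neg_one_mem_unitPowers hmax
    (by exact_mod_cast CharP.cast_eq_zero R (p ^ 2)) hpn (orderOf_pos_iff.1 (by omega)) heven
  have key (d : R) : diffCount (unitPowers ξ) d ≠ p ^ r - 2 := fun hd => by
    obtain ⟨w, hw⟩ := exists_eq_image_range_of_diffCount_add_one_eq (d := d) (by omega) hpn
      heven hneg (by omega)
    have hr1 : r = 1 := by
      have := orderOf_le_of_eq_image_range (by omega) hpn hw
      by_contra hr1
      have : p ^ r ≤ p + 1 := by omega
      nlinarith [Nat.pow_le_pow_right hp.pos (show 2 ≤ r by omega)]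
    subst hr1
    exact ne_image_range_add_nsmul_two hodd (by obtain ⟨k, rfl⟩ := hodd; omega)
      (fun _ hx _ hy => mul_mem_unitPowers hx hy) (fun _ => neg_mem_unitPowers hneg)
      (by rw [card_unitPowers, hξ, pow_one]) w (by rwa [hξ, pow_one] at hw)
  refine ⟨key, fun d hd => ?_⟩
  have := diffCount_unitPowers_lt_orderOf hpn hd
  rw [card_inter_image_add_eq_diffCount hd]
  have := key d
  omega

/-- Let `p` be an odd prime and `r ≥ 1` with `(p, r) ≠ (3, 1)`, and let `T^*` be
the Teichmüller group of `GR(p², r)`.  Then no element `d` has multiplicity `p^r - 2` in the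
multiset `ΔT^*`; equivalently, for every nonzero `d`, the block intersection number
`|T^* ∩ (T^* + d)|` is strictly less than `p^r - 2`. -/
theorem stmt18 {R : Type*} [CommRing R] [Fintype R] [IsLocalRing R] [DecidableEq R]
    (p r : ℕ) (hp : p.Prime) (hodd : Odd p) (hr : 1 ≤ r) (hpr : ¬(p = 3 ∧ r = 1))
    (hchar : CharP R (p ^ 2))
    (hmax : IsLocalRing.maximalIdeal R = Ideal.span {(p : R)})
    (hcard : Fintype.card R = p ^ (2 * r))
    (ξ : Rˣ) (hξ : orderOf ξ = p ^ r - 1)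
    (Tstar : Finset R)
    (hTstar : Tstar = (Finset.range (p ^ r - 1)).image (fun i => (ξ : R) ^ i)) :
    (∀ d : R, diffCount Tstar d ≠ p ^ r - 2) ∧
    (∀ d : R, d ≠ 0 → (Tstar ∩ Tstar.image (fun t => t + d)).card < p ^ r - 2) :=
  stmt18_general p r hp hodd hr hpr hchar hmax ξ hξ Tstar hTstar
end
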